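/- Let M_HL denote the uncentered Hardy–Littlewood maximal operator on ℝ (taken over open bounded intervals). Let E ⊆ ℝ be a measurable set with |E| < ∞ and let 0 ≤ γ < α < 1. Then |{x ∈ ℝ : M_HL(χ_E + γ·χ_{E^c})(x) > α}| ≤ (1 + 4(1−α)/(α−γ))·|E|. -/

import Mathlib

open MeasureTheory Set Filter
open scoped ENNReal

/-- The uncentered Hardy–Littlewood maximal operator on `ℝ`, taken over
open bounded intervals containing the point. -/
noncomputable def MHL (f : ℝ → ℝ≥0∞) (x : ℝ) : ℝ≥0∞ :=
  ⨆ (a : ℝ) (b : ℝ) (_ : a < x) (_ : x < b),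
    (∫⁻ y in Set.Ioo a b, f y) / volume (Set.Ioo a b)

/-!
Every point of the level set `U = {M_HL f > α}` lies in an open interval `I ⊆ U` on which `f`
has average `> α`; since `f = 1` on `E` and `f = γ` off `E`, this forces
`|I \ E| ≤ c |I ∩ E|` with `c = (1 - α) / (α - γ)`. A compact `K ⊆ U` is covered by finitely
many such intervals, and discarding intervals contained in the union of two others leaves a
cover in which no point lies in three intervals (of three intervals through one point, the
one with neither the leftmost left end nor the rightmost right end is redundant). Hence
`|K| ≤ |E| + ∑ |I \ E| ≤ |E| + c ∑ |I ∩ E| ≤ (1 + 2c) |E|`, and inner regularity gives the same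
bound for `U`.
-/

open scoped Finset

lemma le_ofReal_mul_of_ofReal_mul_add_lt {γ α : ℝ} (hγ : 0 ≤ γ) (hγα : γ < α)
    {e d : ℝ≥0∞} (h : ENNReal.ofReal α * (e + d) < e + ENNReal.ofReal γ * d) :
    d ≤ ENNReal.ofReal ((1 - α) / (α - γ)) * e := by
  have hα : 0 ≤ α := hγ.trans hγα.le
  obtain ⟨he, hd⟩ := ENNReal.add_ne_top.mp
    (ENNReal.lt_top_of_mul_ne_top_right h.ne_top (by simpa using hγ.trans_lt hγα)).ne
  rw [← ENNReal.ofReal_toReal he, ← ENNReal.ofReal_toReal hd] at h ⊢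
  rw [← ENNReal.ofReal_add (by positivity) (by positivity), ← ENNReal.ofReal_mul hα,
    ← ENNReal.ofReal_mul hγ, ← ENNReal.ofReal_add (by positivity) (by positivity),
    ENNReal.ofReal_lt_ofReal_iff_of_nonneg (by positivity)] at h
  rw [← ENNReal.ofReal_mul' (by positivity)]
  refine ENNReal.ofReal_le_ofReal ?_
  rw [div_mul_eq_mul_div, le_div_iff₀ (by linarith)]
  linarith

lemma setLIntegral_indicator_add_mul_indicator_compl {α : Type*} [MeasurableSpace α]
    (μ : Measure α) {E : Set α} (hE : MeasurableSet E) (S : Set α) (c : ℝ≥0∞) :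
    ∫⁻ y in S, E.indicator 1 y + c * Eᶜ.indicator 1 y ∂μ = μ (S ∩ E) + c * μ (S \ E) := by
  rw [lintegral_add_left (measurable_one.indicator hE),
    lintegral_const_mul _ (measurable_one.indicator hE.compl), lintegral_indicator_one hE,
    lintegral_indicator_one hE.compl, Measure.restrict_apply hE, Measure.restrict_apply hE.compl,
    Set.inter_comm, Set.inter_comm Eᶜ, ← sdiff_eq]

lemma setLAverage_Ioo_le_MHL (f : ℝ → ℝ≥0∞) {a b x : ℝ} (hx : x ∈ Ioo a b) :
    (∫⁻ y in Ioo a b, f y) / volume (Ioo a b) ≤ MHL f x :=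
  le_iSup₂_of_le a b <| le_iSup₂_of_le (α := ℝ≥0∞) hx.1 hx.2 le_rfl

lemma exists_Ioo_of_lt_MHL {f : ℝ → ℝ≥0∞} {t : ℝ≥0∞} {x : ℝ} (hx : t < MHL f x) :
    ∃ a b, x ∈ Ioo a b ∧ Ioo a b ⊆ {y | t < MHL f y} ∧
      t < (∫⁻ y in Ioo a b, f y) / volume (Ioo a b) := by
  simp only [MHL, lt_iSup_iff] at hx
  obtain ⟨a, b, hax, hxb, ht⟩ := hx
  exact ⟨a, b, ⟨hax, hxb⟩, fun y hy => ht.trans_le (setLAverage_Ioo_le_MHL f hy), ht⟩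

lemma sum_measure_le_mul_measure_biUnion_of_card_le {α ι : Type*} [MeasurableSpace α]
    (μ : Measure α) (t : Finset ι) {s : ι → Set α} [∀ x, DecidablePred (x ∈ s ·)]
    (hs : ∀ i ∈ t, MeasurableSet (s i))
    {n : ℕ} (hn : ∀ x, #{i ∈ t | x ∈ s i} ≤ n) :
    ∑ i ∈ t, μ (s i) ≤ n * μ (⋃ i ∈ t, s i) := by
  have hpt : ∀ x, ∑ i ∈ t, (s i).indicator 1 x ≤
      (⋃ i ∈ t, s i).indicator (fun _ => (n : ℝ≥0∞)) x := by
    intro x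
    by_cases hx : x ∈ ⋃ i ∈ t, s i
    · rw [indicator_of_mem hx]
      simp only [indicator_apply, Pi.one_apply, Finset.sum_boole]
      exact_mod_cast hn x
    · rw [indicator_of_notMem hx]
      refine (Finset.sum_eq_zero fun i hi => indicator_of_notMem (fun hxi => hx ?_) _).le
      exact mem_biUnion hi hxi
  calc ∑ i ∈ t, μ (s i) = ∫⁻ x, ∑ i ∈ t, (s i).indicator 1 x ∂μ := by
        rw [lintegral_finsetSum' _ fun i hi => (measurable_one.indicator (hs i hi)).aemeasurable]
        exact Finset.sum_congr rfl fun i hi => (lintegral_indicator_one (hs i hi)).symm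
    _ ≤ ∫⁻ x, (⋃ i ∈ t, s i).indicator (fun _ => (n : ℝ≥0∞)) x ∂μ := lintegral_mono hpt
    _ = n * μ (⋃ i ∈ t, s i) := lintegral_indicator_const (t.measurableSet_biUnion hs) _

lemma exists_Ioo_subset_biUnion_erase_of_two_lt_card {ι : Type*} [DecidableEq ι] (a b : ι → ℝ)
    {t : Finset ι} {y : ℝ} (hy : 2 < #{i ∈ t | y ∈ Ioo (a i) (b i)}) :
    ∃ k ∈ t, Ioo (a k) (b k) ⊆ ⋃ i ∈ t.erase k, Ioo (a i) (b i) := by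
  set s := {i ∈ t | y ∈ Ioo (a i) (b i)}
  have hs : s.Nonempty := Finset.card_pos.mp (by omega)
  obtain ⟨i, hi, hai⟩ := s.exists_min_image a hs
  obtain ⟨j, hj, hbj⟩ := s.exists_max_image b hs
  obtain ⟨k, hk⟩ : ((s.erase i).erase j).Nonempty := by
    rw [← Finset.card_pos]
    have := Finset.pred_card_le_card_erase (s := s) (a := i)
    have := Finset.pred_card_le_card_erase (s := s.erase i) (a := j)
    omega
  obtain ⟨hkj, hki, hks⟩ : k ≠ j ∧ k ≠ i ∧ k ∈ s := by simpa using hk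
  have hkt : k ∈ t := (Finset.mem_filter.mp hks).1
  rw [Finset.mem_filter] at hi hj
  refine ⟨k, hkt, fun z hz => ?_⟩
  have hz' : z ∈ Ioo (a i) (b i) ∪ Ioo (a j) (b j) := by
    rw [Ioo_union_Ioo' (hj.2.1.trans hi.2.2) (hi.2.1.trans hj.2.2)]
    exact Ioo_subset_Ioo (min_le_of_left_le (hai k hks)) (le_max_of_le_right (hbj k hks)) hz
  rcases hz' with hz' | hz'
  · exact mem_biUnion (Finset.mem_erase.mpr ⟨hki.symm, hi.1⟩) hz'
  · exact mem_biUnion (Finset.mem_erase.mpr ⟨hkj.symm, hj.1⟩) hz'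

lemma exists_subcover_Ioo_card_le_two {ι : Type*} [DecidableEq ι] (a b : ι → ℝ) {K : Set ℝ}
    (t₀ : Finset ι) (hK : K ⊆ ⋃ i ∈ t₀, Ioo (a i) (b i)) :
    ∃ t ⊆ t₀, K ⊆ ⋃ i ∈ t, Ioo (a i) (b i) ∧ ∀ y, #{i ∈ t | y ∈ Ioo (a i) (b i)} ≤ 2 := by
  induction t₀ using Finset.strongInduction with
  | H t₀ ih =>
    by_cases hmult : ∀ y, #{i ∈ t₀ | y ∈ Ioo (a i) (b i)} ≤ 2
    · exact ⟨t₀, subset_rfl, hK, hmult⟩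
    push Not at hmult
    obtain ⟨y, hy⟩ := hmult
    obtain ⟨k, hk, hsub⟩ := exists_Ioo_subset_biUnion_erase_of_two_lt_card a b hy
    have hK' : K ⊆ ⋃ i ∈ t₀.erase k, Ioo (a i) (b i) := by
      intro z hz
      obtain ⟨i, hi, hzi⟩ := mem_iUnion₂.mp (hK hz)
      by_cases hik : i = k
      · exact hsub (hik ▸ hzi)
      · exact mem_biUnion (Finset.mem_erase.mpr ⟨hik, hi⟩) hzi
    obtain ⟨t, ht, htK, htmult⟩ := ih _ (Finset.erase_ssubset hk) hK'
    exact ⟨t, ht.trans (Finset.erase_subset k t₀), htK, htmult⟩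

lemma volume_le_of_isCompact_subset_iUnion_Ioo {ι : Type*} {K E : Set ℝ} (hK : IsCompact K)
    (hE : MeasurableSet E) {c : ℝ≥0∞} (a b : ι → ℝ) (hcov : K ⊆ ⋃ i, Ioo (a i) (b i))
    (hdens : ∀ i, volume (Ioo (a i) (b i) \ E) ≤ c * volume (Ioo (a i) (b i) ∩ E)) :
    volume K ≤ (1 + 2 * c) * volume E := by
  classical
  obtain ⟨t₀, ht₀⟩ := hK.elim_finite_subcover _ (fun i => isOpen_Ioo) hcov
  obtain ⟨t, -, htK, hmult⟩ := exists_subcover_Ioo_card_le_two a b t₀ ht₀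
  have hdiff : K \ E ⊆ ⋃ i ∈ t, Ioo (a i) (b i) \ E := fun z ⟨hzK, hzE⟩ =>
    let ⟨i, hi, hzi⟩ := mem_iUnion₂.mp (htK hzK)
    mem_biUnion hi ⟨hzi, hzE⟩
  have hmult' (y : ℝ) : #{i ∈ t | y ∈ Ioo (a i) (b i) ∩ E} ≤ 2 :=
    (Finset.card_le_card (Finset.monotone_filter_right t fun _ _ hi => hi.1)).trans (hmult y)
  have hinter : ∑ i ∈ t, volume (Ioo (a i) (b i) ∩ E) ≤ 2 * volume E :=
    (sum_measure_le_mul_measure_biUnion_of_card_le volume t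
      (fun i _ => measurableSet_Ioo.inter hE) hmult').trans <|
      mul_le_mul_right (measure_mono (iUnion₂_subset fun i _ => inter_subset_right)) _
  calc volume K ≤ volume (K ∩ E) + volume (K \ E) := measure_le_inter_add_sdiff _ _ _
    _ ≤ volume E + ∑ i ∈ t, volume (Ioo (a i) (b i) \ E) :=
        add_le_add (measure_mono inter_subset_right)
          ((measure_mono hdiff).trans (measure_biUnion_finset_le t _))
    _ ≤ volume E + c * ∑ i ∈ t, volume (Ioo (a i) (b i) ∩ E) := by
        rw [Finset.mul_sum]
        gcongr with i
        exact hdens i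
    _ ≤ volume E + c * (2 * volume E) := by gcongr
    _ = (1 + 2 * c) * volume E := by ring

lemma volume_le_of_forall_mem_exists_Ioo {U E : Set ℝ} (hE : MeasurableSet E) {c : ℝ≥0∞}
    (hU : ∀ x ∈ U, ∃ a b, x ∈ Ioo a b ∧ Ioo a b ⊆ U ∧
      volume (Ioo a b \ E) ≤ c * volume (Ioo a b ∩ E)) :
    volume U ≤ (1 + 2 * c) * volume E := by
  have hUopen : IsOpen U := isOpen_iff_mem_nhds.mpr fun x hx =>
    let ⟨_, _, hx, hsub, _⟩ := hU x hx
    mem_of_superset (Ioo_mem_nhds hx.1 hx.2) hsub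
  choose a b hmem _ hdens using fun x : U => hU x x.2
  rw [hUopen.measure_eq_iSup_isCompact]
  exact iSup₂_le fun K hKU => iSup_le fun hK => volume_le_of_isCompact_subset_iUnion_Ioo hK hE
    a b (fun x hx => mem_iUnion.mpr ⟨⟨x, hKU hx⟩, hmem _⟩) hdens

theorem solyanik_one_dim (E : Set ℝ) (hE : MeasurableSet E)
    (γ α : ℝ) (hγ : 0 ≤ γ) (hγα : γ < α) (hα : α < 1) :
    volume {x : ℝ |
        MHL (fun y => E.indicator 1 y + ENNReal.ofReal γ * Eᶜ.indicator 1 y) x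
          > ENNReal.ofReal α}
      ≤ ENNReal.ofReal (1 + 4 * (1 - α) / (α - γ)) * volume E := by
  set c := (1 - α) / (α - γ)
  refine (volume_le_of_forall_mem_exists_Ioo hE (c := ENNReal.ofReal c) fun x hx => ?_).trans ?_
  · obtain ⟨a, b, hx, hsub, havg⟩ := exists_Ioo_of_lt_MHL hx
    refine ⟨a, b, hx, hsub, le_ofReal_mul_of_ofReal_mul_add_lt hγ hγα ?_⟩
    have hpos : volume (Ioo a b) ≠ 0 := (Measure.measure_Ioo_pos _).mpr (hx.1.trans hx.2) |>.ne'
    rwa [setLIntegral_indicator_add_mul_indicator_compl _ hE,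
      ENNReal.lt_div_iff_mul_lt (.inl hpos) (.inl measure_Ioo_lt_top.ne),
      ← measure_inter_add_sdiff (Ioo a b) hE] at havg
  · have hc : 0 ≤ c := div_nonneg (by linarith) (by linarith)
    rw [← ENNReal.ofReal_ofNat 2, ← ENNReal.ofReal_mul zero_le_two, ← ENNReal.ofReal_one,
      ← ENNReal.ofReal_add zero_le_one (by positivity), mul_div_assoc]
    gcongr
    linarith
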